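/- Let X = Δ/Γ be a hyperbolic Riemann surface uniformized by a Fuchsian group Γ, let g ∈ Aut(Δ), and set Γ_g = g⁻¹Γg. Let g_* : M(Γ) → M(Γ_g), g_*(μ) = (μ∘g)·(ḡ′/g′), and let ĝ : Teich(Γ) → Teich(Γ_g) be the induced biholomorphic map. Let s_π and s_{π_g} be the Douady–Earle sections of the projections π : M(Γ) → Teich(Γ) and π_g : M(Γ_g) → Teich(Γ_g). Then g_* ∘ s_π = s_{π_g} ∘ ĝ; consequently the Douady–Earle section S : Teich(X) → M(X) is well defined, independent of the choice of covering. -/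
import Mathlib


open MeasureTheory OnePoint Metric Topology Set Filter
open scoped Manifold

noncomputable section

/-- The Riemann sphere `ℂ̂ = ℂ ∪ {∞}`. -/
abbrev RS : Type := OnePoint ℂ

/-- The complex Banach space `L^∞(ℂ)`. -/
abbrev Linf : Type := MeasureTheory.Lp ℂ ⊤ (volume : Measure ℂ)

/-- `M(ℂ)`, the open unit ball of `L^∞(ℂ)`; its basepoint is the zero function. -/
abbrev MBall : Type := {μ : Linf // ‖μ‖ < 1}

/-- The basepoint of `M(ℂ)`. -/
def zeroM : MBall := ⟨0, by norm_num⟩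

/-- **Conformal naturality of the Douady–Earle section (Proposition 2).**
Let `X = Δ/Γ` be a hyperbolic Riemann surface uniformized by a Fuchsian group `Γ`,
let `g ∈ Aut(Δ)` and `Γ_g = g⁻¹ Γ g`.  Here:

* `MΓ` and `MΓg` are the invariant balls `M(Γ) ⊆ M(Δ)` and `M(Γ_g) ⊆ M(Δ)` of
  `Γ`- (resp. `Γ_g`-) invariant Beltrami coefficients;
* `π : M(Γ) → Teich(Γ)`, `π(μ) = φ^μ`, and `π_g : M(Γ_g) → Teich(Γ_g)` are the
  standard (surjective) projections;
* `σΓ` and `σΓg` are the (conformally natural) Douady–Earle barycentric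
  retractions `μ ↦` Beltrami coefficient of `ex(φ^μ)`, which map the invariant
  balls into themselves;
* `s_π : Teich(Γ) → M(Γ)` and `s_{π_g} : Teich(Γ_g) → M(Γ_g)` are the Douady–Earle
  sections, characterized by `s_π ∘ π = σΓ`, `π ∘ σΓ = π` (and similarly for `π_g`);
* `g_* : M(Γ) → M(Γ_g)`, `g_*(μ) = (μ∘g)·(conj g′ / g′)`, is the (bijective)
  induced map, and `ghat : Teich(Γ) → Teich(Γ_g)` is the induced biholomorphic map,
  characterized by `ghat ∘ π = π_g ∘ g_*`;
* conformal naturality of the barycentric extension gives `g_* ∘ σΓ = σΓg ∘ g_*`.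

Then `g_* ∘ s_π = s_{π_g} ∘ ghat`; consequently the Douady–Earle section
`S : Teich(X) → M(X)` is well defined, independent of the choice of covering. -/
theorem douadyEarle_section_conformally_natural
    (MΓ MΓg TeichΓ TeichΓg : Type)
    (projΓ : MΓ → TeichΓ) (projΓg : MΓg → TeichΓg)
    (hπ_surj : Function.Surjective projΓ) (hπg_surj : Function.Surjective projΓg)
    (σΓ : MΓ → MΓ) (σΓg : MΓg → MΓg)
    (sπ : TeichΓ → MΓ) (sπg : TeichΓg → MΓg)
    (hsπ : sπ ∘ projΓ = σΓ) (hπσ : projΓ ∘ σΓ = projΓ)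
    (hsπg : sπg ∘ projΓg = σΓg) (hπσg : projΓg ∘ σΓg = projΓg)
    (gstar : MΓ → MΓg) (hgstar_bij : Function.Bijective gstar)
    (ghat : TeichΓ → TeichΓg) (hghat : ∀ μ : MΓ, ghat (projΓ μ) = projΓg (gstar μ))
    (hnat : gstar ∘ σΓ = σΓg ∘ gstar) :
    gstar ∘ sπ = sπg ∘ ghat := by
  funext τ
  obtain ⟨μ, rfl⟩ := hπ_surj τ
  calc gstar (sπ (projΓ μ)) = gstar (σΓ μ) := by rw [← congrFun hsπ μ]; rfl
    _ = σΓg (gstar μ) := congrFun hnat μ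
    _ = sπg (projΓg (gstar μ)) := (congrFun hsπg (gstar μ)).symm
    _ = sπg (ghat (projΓ μ)) := by rw [hghat]
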